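/- Let u ∈ R^d, let π_S be the orthogonal projection onto a subspace S, and let p ∈ [1,2). Define Φ_u(S) = ‖u‖_2^p - ‖u - π_S u‖_2^p. Then ‖u - π_T u‖_2^{2-p} / ‖π_S u‖_2^2 ≥ (Φ_u(S) - Φ_u(T))^{2/p - 1} / (2 Φ_u(S)^{2/p}) for any subspaces S, T with Φ_u(S) ≥ Φ_u(T) > 0 and Φ_u(S) > 0, where π_T is the orthogonal projection onto T. -/

import Mathlib

/-!
Write `a = ‖u‖`, `b = ‖u - π_S u‖`, `c = ‖u - π_T u‖`, so that `‖π_S u‖² = a² - b²` by Pythagoras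
and `Φ_u(S) - Φ_u(T) = c^p - b^p`. Since `b^p a^{2-p} ≤ b a` for `p ≥ 1` and `(a - b)² ≥ 0`, the
denominator satisfies `a² - b² ≤ 2 Φ_u(S) a^{2-p}`. For the numerator, with `q = 2/p - 1`
(so `p q = 2 - p`), raise `(c^p - b^p) a^p ≤ c^p (a^p - b^p)` to the power `q`. Multiplying the two
estimates gives the claim.
-/

namespace Submodule

variable {𝕜 E : Type*} [RCLike 𝕜] [NormedAddCommGroup E] [InnerProductSpace 𝕜 E]
  (K : Submodule 𝕜 E) [K.HasOrthogonalProjection]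

theorem norm_starProjection_sq_eq_sub (u : E) :
    ‖K.starProjection u‖ ^ 2 = ‖u‖ ^ 2 - ‖u - K.starProjection u‖ ^ 2 := by
  rw [norm_sq_eq_add_norm_sq_starProjection u K, starProjection_orthogonal_val]
  ring

theorem norm_sub_starProjection_le (u : E) : ‖u - K.starProjection u‖ ≤ ‖u‖ := by
  rw [← starProjection_orthogonal_val]
  exact Kᗮ.norm_starProjection_apply_le u

end Submodule

namespace Real

theorem rpow_mul_rpow_two_sub_le_mul {a b p : ℝ} (hb : 0 ≤ b) (hba : b ≤ a) (hp : 1 ≤ p) :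
    b ^ p * a ^ (2 - p) ≤ b * a := by
  have ha : 0 ≤ a := hb.trans hba
  calc b ^ p * a ^ (2 - p) = b ^ (p - 1) * a ^ (2 - p) * b := by
        rw [mul_right_comm, ← rpow_add_one' hb (by linarith), sub_add_cancel]
    _ ≤ a ^ (p - 1) * a ^ (2 - p) * b := by gcongr
    _ = b * a := by
        rw [← rpow_add' ha (by norm_num), show p - 1 + (2 - p) = 1 by ring, rpow_one, mul_comm]

theorem sq_sub_sq_le_two_mul_rpow_sub_mul {a b p : ℝ} (hb : 0 ≤ b) (hba : b ≤ a) (hp : 1 ≤ p) :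
    a ^ 2 - b ^ 2 ≤ 2 * (a ^ p - b ^ p) * a ^ (2 - p) := by
  have ha2 : a ^ p * a ^ (2 - p) = a ^ 2 := by
    rw [← rpow_add' (hb.trans hba) (by norm_num), add_sub_cancel, rpow_two]
  nlinarith [sq_nonneg (a - b), rpow_mul_rpow_two_sub_le_mul hb hba hp]

theorem sub_rpow_mul_rpow_le {x y z q : ℝ} (hz : 0 ≤ z) (hzy : z ≤ y) (hyx : y ≤ x) (hq : 0 ≤ q) :
    (y - z) ^ q * x ^ q ≤ y ^ q * (x - z) ^ q := by
  rw [← mul_rpow (by linarith) (by linarith), ← mul_rpow (by linarith) (by linarith)]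
  exact rpow_le_rpow (by nlinarith) (by nlinarith) hq

theorem rpow_sub_rpow_div_le {a b c p : ℝ} (hp1 : 1 ≤ p) (hp2 : p ≤ 2) (hb : 0 ≤ b)
    (hbc : b ≤ c) (hca : c ≤ a) (hba : b < a) :
    (c ^ p - b ^ p) ^ (2 / p - 1) / (2 * (a ^ p - b ^ p) ^ (2 / p)) ≤
      c ^ (2 - p) / (a ^ 2 - b ^ 2) := by
  have hp : 0 < p := by linarith
  set q := 2 / p - 1 with hq
  have hq0 : 0 ≤ q := by rw [hq, sub_nonneg, le_div_iff₀ hp]; linarith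
  have hpq : p * q = 2 - p := by rw [hq]; field_simp
  have hab : 0 < a ^ p - b ^ p := sub_pos.2 (rpow_lt_rpow hb hba hp)
  have hcb : 0 ≤ c ^ p - b ^ p := sub_nonneg.2 (rpow_le_rpow hb hbc hp.le)
  have hden := sq_sub_sq_le_two_mul_rpow_sub_mul hb hba.le hp1
  have hnum := sub_rpow_mul_rpow_le (rpow_nonneg hb p) (rpow_le_rpow hb hbc hp.le)
    (rpow_le_rpow (hb.trans hbc) hca hp.le) hq0
  rw [← rpow_mul (hb.trans hba.le), ← rpow_mul (hb.trans hbc), hpq] at hnum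
  rw [div_le_div_iff₀ (by positivity) (by nlinarith)]
  calc (c ^ p - b ^ p) ^ q * (a ^ 2 - b ^ 2)
      ≤ (c ^ p - b ^ p) ^ q * (2 * (a ^ p - b ^ p) * a ^ (2 - p)) := by gcongr
    _ = 2 * (a ^ p - b ^ p) * ((c ^ p - b ^ p) ^ q * a ^ (2 - p)) := by ring
    _ ≤ 2 * (a ^ p - b ^ p) * (c ^ (2 - p) * (a ^ p - b ^ p) ^ q) := by gcongr
    _ = c ^ (2 - p) * (2 * (a ^ p - b ^ p) ^ (1 + q)) := by
        rw [rpow_one_add' hab.le (by linarith)]; ring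
    _ = c ^ (2 - p) * (2 * (a ^ p - b ^ p) ^ (2 / p)) := by rw [hq, add_sub_cancel]

end Real

theorem stmt11_general (d : ℕ) (u : EuclideanSpace ℝ (Fin d))
    (S T : Submodule ℝ (EuclideanSpace ℝ (Fin d)))
    (p : ℝ) (hp1 : 1 ≤ p) (hp2 : p < 2)
    (ΦS ΦT : ℝ)
    (hΦS : ΦS = ‖u‖ ^ p - ‖u - (Submodule.orthogonalProjectionOnto S u : EuclideanSpace ℝ (Fin d))‖ ^ p)
    (hΦT : ΦT = ‖u‖ ^ p - ‖u - (Submodule.orthogonalProjectionOnto T u : EuclideanSpace ℝ (Fin d))‖ ^ p)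
    (hST : ΦS ≥ ΦT)
    (hproj : (Submodule.orthogonalProjectionOnto S u : EuclideanSpace ℝ (Fin d)) ≠ 0) :
    ‖u - (Submodule.orthogonalProjectionOnto T u : EuclideanSpace ℝ (Fin d))‖ ^ (2 - p) /
        ‖(Submodule.orthogonalProjectionOnto S u : EuclideanSpace ℝ (Fin d))‖ ^ (2 : ℝ) ≥
      (ΦS - ΦT) ^ (2 / p - 1) / (2 * ΦS ^ (2 / p)) := by
  simp only [Submodule.coe_orthogonalProjectionOnto_apply] at *
  have hp : 0 < p := by linarith
  have hS := S.norm_starProjection_sq_eq_sub u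
  have hba : ‖u - S.starProjection u‖ < ‖u‖ := by
    refine lt_of_pow_lt_pow_left₀ 2 (norm_nonneg _) ?_
    linarith [pow_pos (norm_pos_iff.2 hproj) 2]
  have hbc : ‖u - S.starProjection u‖ ≤ ‖u - T.starProjection u‖ := by
    rw [← Real.rpow_le_rpow_iff (norm_nonneg _) (norm_nonneg _) hp]
    linarith
  rw [Real.rpow_two, hS, hΦS, hΦT, sub_sub_sub_cancel_left]
  exact Real.rpow_sub_rpow_div_le hp1 hp2.le (norm_nonneg _) hbc
    (T.norm_sub_starProjection_le u) hba

/-- With `Φ_u(W) = ‖u‖^p - ‖u - π_W u‖^p`, if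
`Φ_u(S) ≥ Φ_u(T) > 0`, `Φ_u(S) > 0`, `π_S u ≠ 0`, and `p ∈ [1,2)`, then
`‖u - π_T u‖^{2-p} / ‖π_S u‖^2 ≥ (Φ_u(S) - Φ_u(T))^{2/p-1} / (2 Φ_u(S)^{2/p})`. -/
theorem stmt11 (d : ℕ) (u : EuclideanSpace ℝ (Fin d))
    (S T : Submodule ℝ (EuclideanSpace ℝ (Fin d)))
    (p : ℝ) (hp1 : 1 ≤ p) (hp2 : p < 2)
    (ΦS ΦT : ℝ)
    (hΦS : ΦS = ‖u‖ ^ p - ‖u - (Submodule.orthogonalProjectionOnto S u : EuclideanSpace ℝ (Fin d))‖ ^ p)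
    (hΦT : ΦT = ‖u‖ ^ p - ‖u - (Submodule.orthogonalProjectionOnto T u : EuclideanSpace ℝ (Fin d))‖ ^ p)
    (hST : ΦS ≥ ΦT) (hTpos : ΦT > 0) (hSpos : ΦS > 0)
    (hproj : (Submodule.orthogonalProjectionOnto S u : EuclideanSpace ℝ (Fin d)) ≠ 0) :
    ‖u - (Submodule.orthogonalProjectionOnto T u : EuclideanSpace ℝ (Fin d))‖ ^ (2 - p) /
        ‖(Submodule.orthogonalProjectionOnto S u : EuclideanSpace ℝ (Fin d))‖ ^ (2 : ℝ) ≥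
      (ΦS - ΦT) ^ (2 / p - 1) / (2 * ΦS ^ (2 / p)) :=
  stmt11_general d u S T p hp1 hp2 ΦS ΦT hΦS hΦT hST hproj
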